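/- Fix a positive integer l and α ∈ (−1,1). For t > 0 let A(t) = {(n,λ) ∈ (ℤ∖{0}) × ℤ_{≥0} : (π|n|/2)(2λ + 1 − α·sgn n) ≤ t}, and define S₁(t) = #A(t) and S₂(t) = Σ_{(n,λ) ∈ A(t)} 2l|n|. Then S₁(t)/S₂(t) → 0 as t → ∞; more precisely, S₁(t) grows like t·log t and S₂(t) grows like t² as t → ∞. -/

import Mathlib

open Filter Asymptotics

noncomputable section

/-- A(t): pairs (n,λ) with eigenvalue (π|n|/2)(2λ+1−α·sgn n) ≤ t -/
def Aset (α t : ℝ) : Set (ℤ × ℕ) :=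
  {p | p.1 ≠ 0 ∧
    Real.pi * |(p.1 : ℝ)| / 2 * (2 * (p.2 : ℝ) + 1 - α * (p.1.sign : ℝ)) ≤ t}

/-- S₁(t) = #A(t) -/
def S1 (α t : ℝ) : ℕ := (Aset α t).ncard

/-- S₂(t) = Σ_{(n,λ) ∈ A(t)} 2l|n| -/
def S2 (l : ℕ) (α t : ℝ) : ℝ :=
  ∑' p : (Aset α t), (2 * (l : ℝ) * |((p : ℤ × ℕ).1 : ℝ)|)

namespace S19

def cnt (α t : ℝ) (n : ℤ) : ℕ :=
  (⌊t / (Real.pi * |(n : ℝ)|) - (1 - α * ((n.sign : ℤ) : ℝ)) / 2⌋ + 1).toNat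

lemma sign_pm : ∀ {n : ℤ}, n ≠ 0 → n.sign = 1 ∨ n.sign = -1
  | Int.ofNat 0, hn => absurd rfl hn
  | Int.ofNat (_+1), _ => Or.inl rfl
  | Int.negSucc _, _ => Or.inr rfl

lemma abs_pos_real {n : ℤ} (hn : n ≠ 0) : (0:ℝ) < |(n:ℝ)| := by
  simpa using abs_pos.2 (show (n:ℝ) ≠ 0 by exact_mod_cast hn)

lemma mem_Aset_iff (α t : ℝ) {n : ℤ} (hn : n ≠ 0) (k : ℕ) :
    (n, k) ∈ Aset α t ↔ k < cnt α t n := by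
  have hπ := Real.pi_pos
  have habs := abs_pos_real hn
  have hd : 0 < Real.pi * |(n:ℝ)| := mul_pos hπ habs
  have h1 : (n, k) ∈ Aset α t ↔
      Real.pi * |(n:ℝ)| / 2 * (2 * (k:ℝ) + 1 - α * ((n.sign : ℤ) : ℝ)) ≤ t := by
    simp [Aset, hn]
  rw [h1]
  have h2 : Real.pi * |(n:ℝ)| / 2 * (2 * (k:ℝ) + 1 - α * ((n.sign : ℤ) : ℝ)) ≤ t ↔
      (k : ℝ) ≤ t / (Real.pi * |(n:ℝ)|) - (1 - α * ((n.sign : ℤ) : ℝ)) / 2 := by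
    constructor
    · intro h
      rw [le_sub_iff_add_le, ← sub_nonneg]
      rw [← sub_nonneg] at h
      have := (div_nonneg (by linarith : (0:ℝ) ≤ t - Real.pi * |(n:ℝ)| / 2 *
        (2 * (k:ℝ) + 1 - α * ((n.sign : ℤ) : ℝ))) hd.le)
      have heq : (t - Real.pi * |(n:ℝ)| / 2 * (2 * (k:ℝ) + 1 - α * ((n.sign : ℤ) : ℝ))) /
          (Real.pi * |(n:ℝ)|) = t / (Real.pi * |(n:ℝ)|) - ((k:ℝ) + (1 - α * ((n.sign : ℤ) : ℝ)) / 2) := by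
        field_simp
        ring
      rw [heq] at this
      linarith
    · intro h
      rw [le_sub_iff_add_le, le_div_iff₀ hd] at h
      nlinarith
  rw [h2, cnt, Int.lt_toNat, Int.lt_add_one_iff, Int.le_floor]
  push_cast
  rfl

lemma abs_mul_sign (hα : |α| < 1) {n : ℤ} (hn : n ≠ 0) :
    |α * ((n.sign : ℤ) : ℝ)| = |α| := by
  rcases sign_pm hn with h | h <;> simp [h, abs_mul]

lemma mul_sign_le (hα : |α| < 1) {n : ℤ} (hn : n ≠ 0) :
    α * ((n.sign : ℤ) : ℝ) ≤ |α| :=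
  (le_abs_self _).trans (abs_mul_sign hα hn).le

lemma neg_le_mul_sign (hα : |α| < 1) {n : ℤ} (hn : n ≠ 0) :
    -|α| ≤ α * ((n.sign : ℤ) : ℝ) := by
  have := (abs_le.1 (abs_mul_sign hα hn).le).1
  linarith [neg_abs_le (α * ((n.sign : ℤ) : ℝ)), (abs_mul_sign hα hn).symm.le,
    (abs_le.1 (le_of_eq (abs_mul_sign hα hn))).1]

lemma toNat_real_le {m : ℤ} {c : ℝ} (hc : 0 ≤ c) (h : (m : ℝ) ≤ c) :
    ((m.toNat : ℕ) : ℝ) ≤ c := by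
  rcases le_or_gt 0 m with hm | hm
  · rw [← Int.toNat_of_nonneg hm] at h
    exact_mod_cast h
  · simp [Int.toNat_of_nonpos hm.le, hc]

lemma le_toNat_real {m : ℤ} {c : ℝ} (h : c ≤ (m : ℝ)) : c ≤ ((m.toNat : ℕ) : ℝ) := by
  have h2 : (m : ℝ) ≤ ((m.toNat : ℕ) : ℝ) := by exact_mod_cast Int.self_le_toNat m
  linarith

lemma cnt_le {α t : ℝ} (hα : |α| < 1) (ht : 0 ≤ t) {n : ℤ} (hn : n ≠ 0) :
    (cnt α t n : ℝ) ≤ t / (Real.pi * |(n:ℝ)|) + 1 := by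
  have hd : 0 < Real.pi * |(n:ℝ)| := mul_pos Real.pi_pos (abs_pos_real hn)
  have hs : α * ((n.sign : ℤ) : ℝ) ≤ 1 := (mul_sign_le hα hn).trans hα.le
  have hc : 0 ≤ t / (Real.pi * |(n:ℝ)|) + 1 := by positivity
  refine toNat_real_le hc ?_
  push_cast
  have := Int.floor_le (t / (Real.pi * |(n:ℝ)|) - (1 - α * ((n.sign : ℤ) : ℝ)) / 2)
  linarith

lemma le_cnt {α t : ℝ} (hα : |α| < 1) {n : ℤ} (hn : n ≠ 0) :
    t / (Real.pi * |(n:ℝ)|) - 1 ≤ (cnt α t n : ℝ) := by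
  refine le_toNat_real ?_
  push_cast
  have h2 := Int.lt_floor_add_one (t / (Real.pi * |(n:ℝ)|) - (1 - α * ((n.sign : ℤ) : ℝ)) / 2)
  have hs : -1 ≤ α * ((n.sign : ℤ) : ℝ) := le_trans (by linarith) (neg_le_mul_sign hα hn)
  linarith

lemma cnt_eq_zero {α t : ℝ} (hα : |α| < 1) (ht : 0 ≤ t) {n : ℤ} (hn : n ≠ 0)
    (h : 2 * t / (Real.pi * (1 - |α|)) < |(n:ℝ)|) : cnt α t n = 0 := by
  have hd : 0 < Real.pi * |(n:ℝ)| := mul_pos Real.pi_pos (abs_pos_real hn)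
  have hβ : 0 < 1 - |α| := by linarith
  have hden : 0 < Real.pi * (1 - |α|) := mul_pos Real.pi_pos hβ
  have h2 : 2 * t < Real.pi * (1 - |α|) * |(n:ℝ)| := by
    rw [div_lt_iff₀ hden] at h
    linarith
  have hy : t / (Real.pi * |(n:ℝ)|) - (1 - α * ((n.sign : ℤ) : ℝ)) / 2 < 0 := by
    have hs : α * ((n.sign : ℤ) : ℝ) ≤ |α| := mul_sign_le hα hn
    have : t / (Real.pi * |(n:ℝ)|) < (1 - |α|) / 2 := by
      rw [div_lt_iff₀ hd]
      nlinarith [abs_pos_real hn]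
    linarith
  have hfl : ⌊t / (Real.pi * |(n:ℝ)|) - (1 - α * ((n.sign : ℤ) : ℝ)) / 2⌋ < 0 :=
    Int.floor_lt.2 (by exact_mod_cast hy)
  rw [cnt, Int.toNat_of_nonpos (by omega)]

def Npos (α t : ℝ) : ℕ := ⌈2 * t / (Real.pi * (1 - |α|))⌉₊

def Dset (α t : ℝ) : Finset ℤ :=
  (Finset.Icc 1 (Npos α t)).image (fun k : ℕ => (k : ℤ)) ∪
  (Finset.Icc 1 (Npos α t)).image (fun k : ℕ => -(k : ℤ))

def Fset (α t : ℝ) : Finset (ℤ × ℕ) :=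
  (Dset α t).biUnion (fun n => (Finset.range (cnt α t n)).image (fun j => (n, j)))

lemma ne_zero_of_mem_Dset {α t : ℝ} {n : ℤ} (h : n ∈ Dset α t) : n ≠ 0 := by
  simp only [Dset, Finset.mem_union, Finset.mem_image, Finset.mem_Icc] at h
  rcases h with ⟨k, ⟨hk1, _⟩, rfl⟩ | ⟨k, ⟨hk1, _⟩, rfl⟩ <;> omega

lemma mem_Dset_of {α t : ℝ} {n : ℤ} (hn : n ≠ 0) (hN : n.natAbs ≤ Npos α t) :
    n ∈ Dset α t := by
  simp only [Dset, Finset.mem_union, Finset.mem_image, Finset.mem_Icc]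
  rcases lt_or_gt_of_ne hn with h | h
  · right; exact ⟨n.natAbs, ⟨by omega, hN⟩, by omega⟩
  · left; exact ⟨n.natAbs, ⟨by omega, hN⟩, by omega⟩

lemma Aset_eq {α t : ℝ} (hα : |α| < 1) (ht : 0 ≤ t) :
    Aset α t = ↑(Fset α t) := by
  ext ⟨n, k⟩
  simp only [Fset, Finset.coe_biUnion, Set.mem_iUnion, Finset.mem_coe,
    Finset.mem_image, Finset.mem_range]
  constructor
  · intro hp
    have hn : n ≠ 0 := hp.1
    have hk : k < cnt α t n := (mem_Aset_iff α t hn k).1 hp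
    have hcnt : cnt α t n ≠ 0 := by omega
    have hle : |(n:ℝ)| ≤ 2 * t / (Real.pi * (1 - |α|)) := by
      by_contra hcon
      exact hcnt (cnt_eq_zero hα ht hn (by linarith [not_le.1 hcon]))
    have hle2 : (n.natAbs : ℝ) ≤ (Npos α t : ℝ) := by
      rw [show ((n.natAbs : ℕ) : ℝ) = |(n:ℝ)| by
        simp [Nat.cast_natAbs, Int.cast_abs]]
      exact hle.trans (Nat.le_ceil _)
    exact ⟨n, mem_Dset_of hn (by exact_mod_cast hle2), k, hk, rfl⟩
  · rintro ⟨m, hm, j, hj, hjeq⟩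
    rw [Prod.mk.injEq] at hjeq
    obtain ⟨rfl, rfl⟩ := hjeq
    exact (mem_Aset_iff α t (ne_zero_of_mem_Dset hm) _).2 hj

lemma Fset_pairwise_disjoint (α t : ℝ) : ∀ x ∈ Dset α t, ∀ y ∈ Dset α t, x ≠ y →
    Disjoint ((Finset.range (cnt α t x)).image (fun j => (x, j)))
      ((Finset.range (cnt α t y)).image (fun j => (y, j))) := by
  intro x _ y _ hxy
  rw [Finset.disjoint_left]
  rintro ⟨a, b⟩ ha hb
  simp only [Finset.mem_image, Finset.mem_range, Prod.mk.injEq] at ha hb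
  obtain ⟨j1, _, rfl, _⟩ := ha
  obtain ⟨j2, _, h, _⟩ := hb
  exact hxy h.symm

lemma card_Fset (α t : ℝ) : (Fset α t).card = ∑ n ∈ Dset α t, cnt α t n := by
  rw [Fset, Finset.card_biUnion (Fset_pairwise_disjoint α t)]
  refine Finset.sum_congr rfl fun n _ => ?_
  rw [Finset.card_image_of_injective _ (fun a b h => by injection h), Finset.card_range]

lemma sum_Fset (α t : ℝ) (f : ℤ × ℕ → ℝ) :
    ∑ p ∈ Fset α t, f p = ∑ n ∈ Dset α t, ∑ j ∈ Finset.range (cnt α t n), f (n, j) := by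
  rw [Fset, Finset.sum_biUnion (Fset_pairwise_disjoint α t)]
  refine Finset.sum_congr rfl fun n _ => ?_
  rw [Finset.sum_image (fun a _ b _ h => by injection h)]

lemma sum_Dset (α t : ℝ) (g : ℤ → ℝ) :
    ∑ n ∈ Dset α t, g n =
      ∑ k ∈ Finset.Icc 1 (Npos α t), (g (k : ℤ) + g (-(k : ℤ))) := by
  rw [Dset, Finset.sum_union, Finset.sum_image (fun a _ b _ h => by exact_mod_cast h),
    Finset.sum_image (fun a _ b _ h => by omega), ← Finset.sum_add_distrib]
  · rw [Finset.disjoint_left]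
    rintro m hm hm'
    simp only [Finset.mem_image, Finset.mem_Icc] at hm hm'
    obtain ⟨a, ⟨ha, _⟩, rfl⟩ := hm
    obtain ⟨b, ⟨hb, _⟩, hb2⟩ := hm'
    omega

lemma S1_eq {α t : ℝ} (hα : |α| < 1) (ht : 0 ≤ t) :
    (S1 α t : ℝ) = ∑ k ∈ Finset.Icc 1 (Npos α t),
      ((cnt α t (k : ℤ) : ℝ) + (cnt α t (-(k : ℤ)) : ℝ)) := by
  rw [S1, Aset_eq hα ht, Set.ncard_coe_finset, card_Fset]
  push_cast
  rw [sum_Dset α t (fun n => (cnt α t n : ℝ))]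

lemma S2_eq {l : ℕ} {α t : ℝ} (hα : |α| < 1) (ht : 0 ≤ t) :
    S2 l α t = ∑ k ∈ Finset.Icc 1 (Npos α t),
      (2 * (l : ℝ) * (k : ℝ) * ((cnt α t (k : ℤ) : ℝ) + (cnt α t (-(k : ℤ)) : ℝ))) := by
  rw [S2, Aset_eq hα ht]
  rw [show (∑' (p : ↑((Fset α t : Finset (ℤ × ℕ)) : Set (ℤ × ℕ))),
      2 * (l : ℝ) * |(((p : ℤ × ℕ).1 : ℤ) : ℝ)|)
      = ∑ p ∈ Fset α t, 2 * (l : ℝ) * |((p.1 : ℤ) : ℝ)| from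
    Finset.tsum_subtype' (Fset α t) (fun p => 2 * (l : ℝ) * |((p.1 : ℤ) : ℝ)|)]
  rw [sum_Fset α t (fun p => 2 * (l : ℝ) * |((p.1 : ℤ) : ℝ)|),
    sum_Dset α t (fun n => ∑ j ∈ Finset.range (cnt α t n), 2 * (l : ℝ) * |((n : ℤ) : ℝ)|)]
  refine Finset.sum_congr rfl fun k hk => ?_
  simp only [Finset.sum_const, Finset.card_range, nsmul_eq_mul]
  push_cast
  rw [abs_neg, abs_of_nonneg (Nat.cast_nonneg k)]
  ring

lemma abs_cast_nat (k : ℕ) : |(((k : ℤ) : ℤ) : ℝ)| = (k : ℝ) := by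
  push_cast; exact abs_of_nonneg (Nat.cast_nonneg k)

lemma abs_cast_neg_nat (k : ℕ) : |((-(k : ℤ) : ℤ) : ℝ)| = (k : ℝ) := by
  push_cast; rw [abs_neg]; exact abs_of_nonneg (Nat.cast_nonneg k)

lemma div_pi_inv {t : ℝ} {k : ℕ} (hk : 1 ≤ k) :
    t / (Real.pi * (k : ℝ)) = (t / Real.pi) * (k : ℝ)⁻¹ := by
  have : (0:ℝ) < k := by exact_mod_cast hk
  field_simp

lemma cnt_pair_le {α t : ℝ} (hα : |α| < 1) (ht : 0 ≤ t) {k : ℕ} (hk : 1 ≤ k) :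
    (cnt α t (k : ℤ) : ℝ) + (cnt α t (-(k : ℤ)) : ℝ) ≤ 2 * ((t / Real.pi) * (k : ℝ)⁻¹ + 1) := by
  have hk0 : ((k : ℤ)) ≠ 0 := by omega
  have hk0' : (-(k : ℤ)) ≠ 0 := by omega
  have h1 := cnt_le hα ht hk0
  have h2 := cnt_le hα ht hk0'
  rw [show ((((k:ℤ)):ℤ):ℝ) = ((k:ℤ):ℝ) from rfl] at h1
  rw [abs_cast_nat k] at h1
  rw [abs_cast_neg_nat k] at h2
  rw [div_pi_inv hk] at h1 h2
  linarith

lemma le_cnt_pos {α t : ℝ} (hα : |α| < 1) {k : ℕ} (hk : 1 ≤ k) :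
    (t / Real.pi) * (k : ℝ)⁻¹ - 1 ≤ (cnt α t (k : ℤ) : ℝ) := by
  have hk0 : ((k : ℤ)) ≠ 0 := by omega
  have h1 := le_cnt hα (t := t) hk0
  rw [abs_cast_nat k, div_pi_inv hk] at h1
  linarith

lemma sum_inv_Icc_le (N : ℕ) :
    ∑ d ∈ Finset.Icc 1 N, (d : ℝ)⁻¹ ≤ 1 + Real.log N := by
  have := harmonic_le_one_add_log N
  rw [harmonic_eq_sum_Icc] at this
  push_cast at this
  exact this

lemma log_le_sum_inv_Icc (N : ℕ) :
    Real.log ((N : ℝ) + 1) ≤ ∑ d ∈ Finset.Icc 1 N, (d : ℝ)⁻¹ := by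
  have := log_add_one_le_harmonic N
  rw [harmonic_eq_sum_Icc] at this
  push_cast at this
  exact this

lemma sum_id_Icc (N : ℕ) : ∑ k ∈ Finset.Icc 1 N, (k : ℝ) = N * (N + 1) / 2 := by
  induction N with
  | zero => simp
  | succ n ih =>
    rw [Finset.sum_Icc_succ_top (by omega), ih]
    push_cast
    ring

lemma Npos_pos {α t : ℝ} (hα : |α| < 1) (ht : 1 ≤ t) : 1 ≤ Npos α t := by
  have hβ : 0 < 1 - |α| := by linarith
  have h : 0 < 2 * t / (Real.pi * (1 - |α|)) := by positivity
  exact Nat.ceil_pos.2 h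

lemma le_Npos {α t : ℝ} : 2 * t / (Real.pi * (1 - |α|)) ≤ (Npos α t : ℝ) :=
  Nat.le_ceil _

lemma Npos_le {α t : ℝ} (hα : |α| < 1) (ht : 0 ≤ t) :
    (Npos α t : ℝ) ≤ 2 * t / (Real.pi * (1 - |α|)) + 1 := by
  have hβ : 0 < 1 - |α| := by linarith
  exact (Nat.ceil_lt_add_one (by positivity)).le

lemma S1_le {α t : ℝ} (hα : |α| < 1) (ht : 1 ≤ t) :
    (S1 α t : ℝ) ≤ 2 * (t * (1 + Real.log (Npos α t)) + (Npos α t : ℝ)) := by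
  have ht0 : (0:ℝ) ≤ t := by linarith
  have hπ := Real.pi_gt_three
  rw [S1_eq hα ht0]
  have hN1 : 1 ≤ Npos α t := Npos_pos hα ht
  set N := Npos α t with hN
  have hlogN : 0 ≤ Real.log N := Real.log_nonneg (by exact_mod_cast hN1)
  calc ∑ k ∈ Finset.Icc 1 N, ((cnt α t (k : ℤ) : ℝ) + (cnt α t (-(k : ℤ)) : ℝ))
      ≤ ∑ k ∈ Finset.Icc 1 N, 2 * ((t / Real.pi) * (k : ℝ)⁻¹ + 1) :=
        Finset.sum_le_sum fun k hk => cnt_pair_le hα ht0 (Finset.mem_Icc.1 hk).1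
    _ = 2 * (t / Real.pi) * (∑ k ∈ Finset.Icc 1 N, (k : ℝ)⁻¹) + 2 * N := by
        rw [Finset.sum_congr rfl (fun k _ => by ring :
          ∀ k ∈ Finset.Icc 1 N, 2 * ((t / Real.pi) * (k : ℝ)⁻¹ + 1)
            = (2 * (t / Real.pi)) * (k : ℝ)⁻¹ + 2),
          Finset.sum_add_distrib, ← Finset.mul_sum, Finset.sum_const, Nat.card_Icc,
          nsmul_eq_mul]
        push_cast [Nat.add_sub_cancel]
        ring
    _ ≤ 2 * (t / Real.pi) * (1 + Real.log N) + 2 * N := by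
        have h1 := sum_inv_Icc_le N
        have h2 : (0:ℝ) ≤ 2 * (t / Real.pi) := by positivity
        nlinarith
    _ ≤ 2 * (t * (1 + Real.log N) + (N : ℝ)) := by
        have hdiv : t / Real.pi ≤ t := by
          rw [div_le_iff₀ (by linarith)]
          nlinarith
        nlinarith

lemma le_S1 {α t : ℝ} (hα : |α| < 1) (ht : 1 ≤ t) :
    (t / Real.pi) * Real.log (t / Real.pi) - t / Real.pi ≤ (S1 α t : ℝ) := by
  have ht0 : (0:ℝ) ≤ t := by linarith
  have hπ := Real.pi_gt_three
  have hβ : 0 < 1 - |α| := by linarith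
  have hβ1 : 1 - |α| ≤ 1 := by
    have := abs_nonneg α; linarith
  have htπ : 0 < t / Real.pi := by positivity
  set M := ⌊t / Real.pi⌋₊ with hM
  have hMle : (M : ℝ) ≤ t / Real.pi := Nat.floor_le htπ.le
  have hMN : M ≤ Npos α t := by
    have h1 : t / Real.pi ≤ 2 * t / (Real.pi * (1 - |α|)) := by
      rw [div_le_div_iff₀ (by linarith) (by positivity)]
      nlinarith [mul_pos (lt_of_lt_of_le zero_lt_one ht)
        (show (0:ℝ) < Real.pi by linarith), abs_nonneg α]
    have := le_Npos (α := α) (t := t)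
    exact_mod_cast Nat.cast_le.1 (show (M:ℝ) ≤ (Npos α t : ℝ) by linarith)
  rw [S1_eq hα ht0]
  calc (t / Real.pi) * Real.log (t / Real.pi) - t / Real.pi
      ≤ (t / Real.pi) * Real.log ((M : ℝ) + 1) - (M : ℝ) := by
        have hlog : Real.log (t / Real.pi) ≤ Real.log ((M : ℝ) + 1) :=
          Real.log_le_log htπ (le_of_lt (Nat.lt_floor_add_one _))
        nlinarith
    _ ≤ (t / Real.pi) * (∑ k ∈ Finset.Icc 1 M, (k : ℝ)⁻¹) - (M : ℝ) := by
        have := log_le_sum_inv_Icc M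
        nlinarith
    _ = ∑ k ∈ Finset.Icc 1 M, ((t / Real.pi) * (k : ℝ)⁻¹ - 1) := by
        rw [Finset.sum_sub_distrib, ← Finset.mul_sum, Finset.sum_const, Nat.card_Icc,
          nsmul_eq_mul]
        push_cast [Nat.add_sub_cancel]
        ring
    _ ≤ ∑ k ∈ Finset.Icc 1 M, ((cnt α t (k : ℤ) : ℝ) + (cnt α t (-(k : ℤ)) : ℝ)) := by
        refine Finset.sum_le_sum fun k hk => ?_
        have h1 := le_cnt_pos hα (t := t) (Finset.mem_Icc.1 hk).1
        have h2 : (0:ℝ) ≤ (cnt α t (-(k : ℤ)) : ℝ) := Nat.cast_nonneg _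
        linarith
    _ ≤ ∑ k ∈ Finset.Icc 1 (Npos α t), ((cnt α t (k : ℤ) : ℝ) + (cnt α t (-(k : ℤ)) : ℝ)) := by
        refine Finset.sum_le_sum_of_subset_of_nonneg
          (Finset.Icc_subset_Icc le_rfl hMN) fun k _ _ => by positivity

lemma floor_le_Npos {α t : ℝ} (hα : |α| < 1) (ht : 1 ≤ t) :
    ⌊t / Real.pi⌋₊ ≤ Npos α t := by
  have ht0 : (0:ℝ) ≤ t := by linarith
  have hπ := Real.pi_gt_three
  have hβ : 0 < 1 - |α| := by linarith
  have htπ : 0 < t / Real.pi := by positivity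
  have hMle : ((⌊t / Real.pi⌋₊ : ℕ) : ℝ) ≤ t / Real.pi := Nat.floor_le htπ.le
  have h1 : t / Real.pi ≤ 2 * t / (Real.pi * (1 - |α|)) := by
    rw [div_le_div_iff₀ (by linarith) (by positivity)]
    nlinarith [mul_pos (lt_of_lt_of_le zero_lt_one ht)
      (show (0:ℝ) < Real.pi by linarith), abs_nonneg α]
  have := le_Npos (α := α) (t := t)
  exact Nat.cast_le.1 (show ((⌊t / Real.pi⌋₊ : ℕ):ℝ) ≤ (Npos α t : ℝ) by linarith)

lemma S2_le {l : ℕ} {α t : ℝ} (hα : |α| < 1) (ht : 1 ≤ t) :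
    S2 l α t ≤ 4 * l * ((Npos α t : ℝ) * t + (Npos α t : ℝ) * ((Npos α t : ℝ) + 1) / 2) := by
  have ht0 : (0:ℝ) ≤ t := by linarith
  have hπ := Real.pi_gt_three
  rw [S2_eq hα ht0]
  set N := Npos α t with hN
  calc ∑ k ∈ Finset.Icc 1 N, (2 * (l : ℝ) * (k : ℝ) *
        ((cnt α t (k : ℤ) : ℝ) + (cnt α t (-(k : ℤ)) : ℝ)))
      ≤ ∑ k ∈ Finset.Icc 1 N, (4 * (l : ℝ) * (t + (k : ℝ))) := by
        refine Finset.sum_le_sum fun k hk => ?_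
        have hk1 : 1 ≤ k := (Finset.mem_Icc.1 hk).1
        have hk0 : (0:ℝ) < (k : ℝ) := by exact_mod_cast hk1
        have h1 := cnt_pair_le hα ht0 hk1
        have hkk : (k : ℝ) * (k : ℝ)⁻¹ = 1 := mul_inv_cancel₀ hk0.ne'
        have hdiv : t / Real.pi ≤ t := by
          rw [div_le_iff₀ (by linarith)]; nlinarith
        have hml : (0:ℝ) ≤ 2 * (l : ℝ) * (k : ℝ) := by positivity
        calc 2 * (l : ℝ) * (k : ℝ) * ((cnt α t (k : ℤ) : ℝ) + (cnt α t (-(k : ℤ)) : ℝ))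
            ≤ 2 * (l : ℝ) * (k : ℝ) * (2 * ((t / Real.pi) * (k : ℝ)⁻¹ + 1)) :=
              mul_le_mul_of_nonneg_left h1 hml
          _ = 4 * (l : ℝ) * ((t / Real.pi) * ((k : ℝ) * (k : ℝ)⁻¹) + (k : ℝ)) := by ring
          _ ≤ 4 * (l : ℝ) * (t + (k : ℝ)) := by
              rw [hkk, mul_one]
              have : (0:ℝ) ≤ 4 * (l : ℝ) := by positivity
              nlinarith
    _ = 4 * l * ((N : ℝ) * t + (N : ℝ) * ((N : ℝ) + 1) / 2) := by
        rw [Finset.sum_congr rfl (fun k _ => by ring :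
          ∀ k ∈ Finset.Icc 1 N, 4 * (l : ℝ) * (t + (k : ℝ))
            = (4 * (l : ℝ) * t) + (4 * (l : ℝ)) * (k : ℝ)),
          Finset.sum_add_distrib, Finset.sum_const, Nat.card_Icc, nsmul_eq_mul,
          ← Finset.mul_sum, sum_id_Icc]
        push_cast [Nat.add_sub_cancel]
        ring

lemma le_S2 {l : ℕ} {α t : ℝ} (hα : |α| < 1) (ht : 1 ≤ t) :
    2 * l * ((t / Real.pi) * (⌊t / Real.pi⌋₊ : ℝ)
      - (⌊t / Real.pi⌋₊ : ℝ) * ((⌊t / Real.pi⌋₊ : ℝ) + 1) / 2) ≤ S2 l α t := by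
  have ht0 : (0:ℝ) ≤ t := by linarith
  rw [S2_eq hα ht0]
  set M := ⌊t / Real.pi⌋₊ with hM
  calc 2 * (l:ℝ) * ((t / Real.pi) * (M : ℝ) - (M : ℝ) * ((M : ℝ) + 1) / 2)
      = ∑ k ∈ Finset.Icc 1 M, (2 * (l : ℝ) * ((t / Real.pi) - (k : ℝ))) := by
        rw [Finset.sum_congr rfl (fun k _ => by ring :
          ∀ k ∈ Finset.Icc 1 M, 2 * (l : ℝ) * ((t / Real.pi) - (k : ℝ))
            = (2 * (l : ℝ) * (t / Real.pi)) - (2 * (l : ℝ)) * (k : ℝ)),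
          Finset.sum_sub_distrib, Finset.sum_const, Nat.card_Icc, nsmul_eq_mul,
          ← Finset.mul_sum, sum_id_Icc]
        push_cast [Nat.add_sub_cancel]
        ring
    _ ≤ ∑ k ∈ Finset.Icc 1 M, (2 * (l : ℝ) * (k : ℝ) *
        ((cnt α t (k : ℤ) : ℝ) + (cnt α t (-(k : ℤ)) : ℝ))) := by
        refine Finset.sum_le_sum fun k hk => ?_
        have hk1 : 1 ≤ k := (Finset.mem_Icc.1 hk).1
        have hk0 : (0:ℝ) < (k : ℝ) := by exact_mod_cast hk1
        have h1 := le_cnt_pos hα (t := t) hk1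
        have hkk : (k : ℝ) * (k : ℝ)⁻¹ = 1 := mul_inv_cancel₀ hk0.ne'
        have h2 : (0:ℝ) ≤ (cnt α t (-(k : ℤ)) : ℝ) := Nat.cast_nonneg _
        have hml : (0:ℝ) ≤ 2 * (l : ℝ) * (k : ℝ) := by positivity
        calc 2 * (l : ℝ) * ((t / Real.pi) - (k : ℝ))
            = 2 * (l : ℝ) * (k : ℝ) * ((t / Real.pi) * (k:ℝ)⁻¹ - 1)
              + 2 * (l:ℝ) * (t / Real.pi) * (1 - (k:ℝ) * (k:ℝ)⁻¹) := by ring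
          _ = 2 * (l : ℝ) * (k : ℝ) * ((t / Real.pi) * (k:ℝ)⁻¹ - 1) := by
              rw [hkk]; ring
          _ ≤ 2 * (l : ℝ) * (k : ℝ) *
              ((cnt α t (k : ℤ) : ℝ) + (cnt α t (-(k : ℤ)) : ℝ)) := by
              refine mul_le_mul_of_nonneg_left ?_ hml
              linarith
    _ ≤ ∑ k ∈ Finset.Icc 1 (Npos α t), (2 * (l : ℝ) * (k : ℝ) *
        ((cnt α t (k : ℤ) : ℝ) + (cnt α t (-(k : ℤ)) : ℝ))) :=
        Finset.sum_le_sum_of_subset_of_nonneg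
          (Finset.Icc_subset_Icc le_rfl (floor_le_Npos hα ht)) fun k _ _ => by positivity

lemma S2_nonneg {l : ℕ} {α t : ℝ} (hα : |α| < 1) (ht : 0 ≤ t) : 0 ≤ S2 l α t := by
  rw [S2_eq hα ht]
  exact Finset.sum_nonneg fun k _ => by positivity

lemma S1_isBigO {α : ℝ} (hα : |α| < 1) :
    (fun t => (S1 α t : ℝ)) =O[atTop] fun t => t * Real.log t := by
  have hβ : 0 < 1 - |α| := by linarith
  have hπ := Real.pi_gt_three
  set C := 2 / (Real.pi * (1 - |α|)) with hC
  have hC0 : 0 < C := by positivity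
  set K := 1 + Real.log (C + 1) + (C + 1) with hK
  have hlogC : 0 ≤ Real.log (C + 1) := Real.log_nonneg (by linarith)
  refine IsBigO.of_bound 4 ?_
  filter_upwards [eventually_ge_atTop (1:ℝ),
    Real.tendsto_log_atTop.eventually_ge_atTop K] with t ht hlog
  have ht0 : (0:ℝ) < t := by linarith
  have hS1 := S1_le hα ht
  have hN1 : (1:ℝ) ≤ (Npos α t : ℝ) := by exact_mod_cast Npos_pos hα ht
  have hNle : (Npos α t : ℝ) ≤ (C + 1) * t := by
    have h1 := Npos_le hα ht0.le
    have h2 : 2 * t / (Real.pi * (1 - |α|)) = C * t := by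
      rw [hC]; ring
    nlinarith
  have hlogN : Real.log (Npos α t) ≤ Real.log (C + 1) + Real.log t := by
    rw [← Real.log_mul (by linarith) (by linarith)]
    exact Real.log_le_log (by linarith) hNle
  have hlogt : 0 < Real.log t := by nlinarith
  rw [Real.norm_eq_abs, Real.norm_eq_abs,
    abs_of_nonneg (by positivity : (0:ℝ) ≤ ((S1 α t : ℕ) : ℝ)),
    abs_of_nonneg (by positivity : (0:ℝ) ≤ t * Real.log t)]
  nlinarith [mul_le_mul_of_nonneg_left hlogN ht0.le,
    mul_le_mul_of_nonneg_left hlog ht0.le]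

lemma isBigO_S1 {α : ℝ} (hα : |α| < 1) :
    (fun t => t * Real.log t) =O[atTop] fun t => (S1 α t : ℝ) := by
  have hπ := Real.pi_gt_three
  have hπ0 : (0:ℝ) < Real.pi := by linarith
  refine IsBigO.of_bound (2 * Real.pi) ?_
  filter_upwards [eventually_ge_atTop (1:ℝ),
    Real.tendsto_log_atTop.eventually_ge_atTop (2 * (Real.log Real.pi + 1))] with t ht hlog
  have ht0 : (0:ℝ) < t := by linarith
  have hS1 := le_S1 hα ht
  have hlogdiv : Real.log (t / Real.pi) = Real.log t - Real.log Real.pi :=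
    Real.log_div ht0.ne' hπ0.ne'
  have hlogπ : 0 < Real.log Real.pi := Real.log_pos (by linarith)
  have hlogt : 0 < Real.log t := by nlinarith
  rw [Real.norm_eq_abs, Real.norm_eq_abs,
    abs_of_nonneg (by positivity : (0:ℝ) ≤ t * Real.log t),
    abs_of_nonneg (by positivity : (0:ℝ) ≤ ((S1 α t : ℕ) : ℝ))]
  rw [hlogdiv] at hS1
  have key : t / Real.pi * (Real.log t - Real.log Real.pi) - t / Real.pi
      ≥ t / Real.pi * (Real.log t / 2) := by
    have h1 : Real.log t - Real.log Real.pi - 1 ≥ Real.log t / 2 := by linarith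
    have h2 : 0 < t / Real.pi := by positivity
    nlinarith
  have h3 : t / Real.pi * (Real.log t / 2) = t * Real.log t / (2 * Real.pi) := by
    field_simp
  rw [h3] at key
  rw [ge_iff_le, div_le_iff₀ (by positivity)] at key
  nlinarith

lemma S2_isBigO {l : ℕ} {α : ℝ} (hα : |α| < 1) :
    (fun t => S2 l α t) =O[atTop] fun t => t ^ 2 := by
  have hβ : 0 < 1 - |α| := by linarith
  have hπ := Real.pi_gt_three
  set C := 2 / (Real.pi * (1 - |α|)) with hC
  have hC0 : 0 < C := by positivity
  refine IsBigO.of_bound (4 * l * ((C + 1) + (C + 1) * (C + 2) / 2)) ?_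
  filter_upwards [eventually_ge_atTop (1:ℝ)] with t ht
  have ht0 : (0:ℝ) < t := by linarith
  have hS2 := S2_le (l := l) hα ht
  have hNle : (Npos α t : ℝ) ≤ (C + 1) * t := by
    have h1 := Npos_le hα ht0.le
    have h2 : 2 * t / (Real.pi * (1 - |α|)) = C * t := by rw [hC]; ring
    nlinarith
  have hN0 : (0:ℝ) ≤ (Npos α t : ℝ) := Nat.cast_nonneg _
  rw [Real.norm_eq_abs, Real.norm_eq_abs, abs_of_nonneg (S2_nonneg hα ht0.le),
    abs_of_nonneg (by positivity : (0:ℝ) ≤ t ^ 2)]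
  have hl0 : (0:ℝ) ≤ (l : ℝ) := Nat.cast_nonneg _
  have hN1' : (Npos α t : ℝ) + 1 ≤ (C + 2) * t := by nlinarith
  have hNN := mul_le_mul hNle hN1' (by positivity) (by positivity : (0:ℝ) ≤ (C + 1) * t)
  have hNt := mul_le_mul_of_nonneg_right hNle ht0.le
  have hsum : (Npos α t : ℝ) * t + (Npos α t : ℝ) * ((Npos α t : ℝ) + 1) / 2
      ≤ (C + 1) * t ^ 2 + (C + 1) * t * ((C + 2) * t) / 2 := by nlinarith
  nlinarith [mul_le_mul_of_nonneg_left hsum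
    (show (0:ℝ) ≤ 4 * (l:ℝ) by positivity)]

lemma isBigO_S2 {l : ℕ} {α : ℝ} (hl : 0 < l) (hα : |α| < 1) :
    (fun t => t ^ 2) =O[atTop] fun t => S2 l α t := by
  have hπ := Real.pi_gt_three
  have hπ0 : (0:ℝ) < Real.pi := by linarith
  refine IsBigO.of_bound (2 * Real.pi ^ 2 / l) ?_
  filter_upwards [eventually_ge_atTop (1:ℝ),
    eventually_ge_atTop (6 * Real.pi)] with t ht ht6
  have ht0 : (0:ℝ) < t := by linarith
  have hS2 := le_S2 (l := l) hα ht
  set x := t / Real.pi with hx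
  have hx0 : 0 < x := by positivity
  set M := ⌊t / Real.pi⌋₊ with hM
  have hM1 : (M : ℝ) ≤ x := Nat.floor_le hx0.le
  have hM2 : x - 1 ≤ (M : ℝ) := by
    have := Nat.lt_floor_add_one x
    push_cast at this ⊢
    linarith
  have hM0 : (0:ℝ) ≤ (M : ℝ) := Nat.cast_nonneg _
  have hl1 : (1:ℝ) ≤ (l : ℝ) := by exact_mod_cast hl
  have hkey : (l:ℝ) * (x ^ 2 - 3 * x) ≤ S2 l α t := by
    have h1 : x * (x - 1) ≤ x * (M : ℝ) := by nlinarith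
    have h2 : (M : ℝ) * ((M : ℝ) + 1) / 2 ≤ x * (x + 1) / 2 := by nlinarith
    nlinarith
  have hx6 : 6 ≤ x := by
    rw [hx, le_div_iff₀ hπ0]
    linarith
  have hS2pos : 0 ≤ S2 l α t := S2_nonneg hα ht0.le
  rw [Real.norm_eq_abs, Real.norm_eq_abs, abs_of_nonneg (by positivity : (0:ℝ) ≤ t ^ 2),
    abs_of_nonneg hS2pos]
  rw [div_mul_eq_mul_div, le_div_iff₀ (by exact_mod_cast hl : (0:ℝ) < (l:ℝ))]
  have hx2 : x ^ 2 = t ^ 2 / Real.pi ^ 2 := by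
    rw [hx]; ring
  -- t^2 * l ≤ 2 π² S2 ; since S2 ≥ l(x² − 3x) ≥ l x²/2 = l t²/(2π²)
  have h4 : x ^ 2 - 3 * x ≥ x ^ 2 / 2 := by nlinarith
  have h5 : (l:ℝ) * (x ^ 2 / 2) ≤ S2 l α t := by nlinarith
  rw [hx2] at h5
  have := mul_le_mul_of_nonneg_left h5 (by positivity : (0:ℝ) ≤ 2 * Real.pi ^ 2)
  calc t ^ 2 * (l:ℝ) = 2 * Real.pi ^ 2 * ((l:ℝ) * (t ^ 2 / Real.pi ^ 2 / 2)) := by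
        field_simp
    _ ≤ 2 * Real.pi ^ 2 * S2 l α t := this
    _ = 2 * Real.pi ^ 2 * S2 l α t := rfl

end S19

/-- S₁(t)/S₂(t) → 0 as t → ∞; more precisely, S₁(t) grows like t·log t
and S₂(t) grows like t². -/
theorem S1_div_S2_tendsto_zero (l : ℕ) (hl : 0 < l) (α : ℝ)
    (hα₁ : -1 < α) (hα₂ : α < 1) :
    Tendsto (fun t : ℝ => (S1 α t : ℝ) / S2 l α t) atTop (nhds 0) ∧
    (fun t : ℝ => (S1 α t : ℝ)) =Θ[atTop] (fun t : ℝ => t * Real.log t) ∧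
    (fun t : ℝ => S2 l α t) =Θ[atTop] (fun t : ℝ => t ^ 2) := by
  have hα : |α| < 1 := abs_lt.2 ⟨hα₁, hα₂⟩
  have h1 : (fun t : ℝ => (S1 α t : ℝ)) =Θ[atTop] (fun t : ℝ => t * Real.log t) :=
    ⟨S19.S1_isBigO hα, S19.isBigO_S1 hα⟩
  have h2 : (fun t : ℝ => S2 l α t) =Θ[atTop] (fun t : ℝ => t ^ 2) :=
    ⟨S19.S2_isBigO hα, S19.isBigO_S2 hl hα⟩
  have hlo : (fun t : ℝ => t * Real.log t) =o[atTop] (fun t : ℝ => t ^ 2) := by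
    have := (isBigO_refl (fun t : ℝ => t) atTop).mul_isLittleO Real.isLittleO_log_id_atTop
    simpa [sq] using this
  have hS1oS2 : (fun t : ℝ => (S1 α t : ℝ)) =o[atTop] fun t : ℝ => S2 l α t :=
    ((S19.S1_isBigO hα).trans_isLittleO hlo).trans_isBigO (S19.isBigO_S2 hl hα)
  exact ⟨hS1oS2.tendsto_div_nhds_zero, h1, h2⟩


end
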